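/- arXiv:2107.01176 — 5 statements merged into one kernel-verified Lean document; each statement's English description precedes it below -/
import Mathlib

section
/- Let J : ℝⁿ → ℝ be twice continuously differentiable with Hessian bounds Ḣ ⪯ ∇²J ⪯ H̄, and set Ĥ := (H̄+Ḣ)/2 and H̃ := H̄ − Ḣ. Then for all r, y, v ∈ ℝⁿ: |⟨v, ∇J(y) − ∇J(r)⟩ − vᵀĤ(y−r)| ≤ ½ ‖v‖_H̃ · ‖y−r‖_H̃. -/
/-!
By the mean value theorem applied to `x ↦ DJ(x) v`, the quantity to bound equals
`D²J(z)(v, y - r) - vᵀĤ(y - r)` for some `z` on the segment `[r, y]`. The symmetric form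
`2 D²J(z) - (H̄ + Ḣ)` is bounded in absolute value on the diagonal by the quadratic form of `H̃`,
and a polarization and discriminant argument turns this into the Cauchy–Schwarz type bound
`|B(v, w)| ≤ ‖v‖_H̃ ‖w‖_H̃` off the diagonal.
-/

open Matrix
open scoped RealInnerProductSpace

namespace LinearMap.BilinForm

variable {E : Type*} [AddCommGroup E] [Module ℝ E]

theorem abs_apply_le_sqrt_mul_sqrt {B Q : LinearMap.BilinForm ℝ E} (hB : B.IsSymm)
    (hBQ : ∀ u, |B u u| ≤ Q u u) (v w : E) :
    |B v w| ≤ √(Q v v) * √(Q w w) := by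
  -- Polarizing at `s • v ± w` makes this quadratic in `s` nonnegative; its discriminant is the claim.
  have hquad : ∀ s : ℝ, 0 ≤ Q v v * (s * s) + (-2 * B v w) * s + Q w w := by
    intro s
    have hadd := abs_le.mp (hBQ (s • v + w))
    have hsub := abs_le.mp (hBQ (s • v - w))
    simp only [map_add, map_sub, map_smul, LinearMap.add_apply, LinearMap.sub_apply,
      LinearMap.smul_apply, smul_eq_mul, hB.eq w v] at hadd hsub
    linarith [hadd.2, hsub.1]
  have hdiscr := discrim_le_zero hquad
  rw [discrim] at hdiscr
  rw [← Real.sqrt_mul ((abs_nonneg _).trans (hBQ v))]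
  exact Real.abs_le_sqrt (by nlinarith)

theorem abs_two_mul_apply_sub_le {B Blo Bhi : LinearMap.BilinForm ℝ E} (hB : B.IsSymm)
    (hBlo : Blo.IsSymm) (hBhi : Bhi.IsSymm)
    (hlo : ∀ u, Blo u u ≤ B u u) (hhi : ∀ u, B u u ≤ Bhi u u) (v w : E) :
    |2 * B v w - (Bhi v w + Blo v w)| ≤ √(Bhi v v - Blo v v) * √(Bhi w w - Blo w w) := by
  have := abs_apply_le_sqrt_mul_sqrt (B := (2 : ℝ) • B - (Bhi + Blo)) (Q := Bhi - Blo)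
    ((hB.smul 2).sub (hBhi.add hBlo)) (fun u => by
      simp only [LinearMap.sub_apply, LinearMap.add_apply, LinearMap.smul_apply, smul_eq_mul]
      exact abs_le.mpr ⟨by linarith [hlo u, hhi u], by linarith [hlo u, hhi u]⟩) v w
  simpa only [LinearMap.sub_apply, LinearMap.add_apply, LinearMap.smul_apply, smul_eq_mul]
    using this

end LinearMap.BilinForm

theorem Matrix.toBilin_euclideanBasisFun_apply {ι : Type*} [Fintype ι] [DecidableEq ι]
    (M : Matrix ι ι ℝ) (x y : EuclideanSpace ℝ ι) :
    M.toBilin (EuclideanSpace.basisFun ι ℝ).toBasis x y = x ⬝ᵥ M *ᵥ y := by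
  rw [Matrix.toBilin_apply, ← Matrix.toBilin'_apply', Matrix.toBilin'_apply]
  simp

theorem exists_apply_sub_apply_eq_fderiv {E F : Type*} [NormedAddCommGroup E] [NormedSpace ℝ E]
    [NormedAddCommGroup F] [NormedSpace ℝ F] {g : E → F →L[ℝ] ℝ} (hg : Differentiable ℝ g)
    (x y : E) (v : F) :
    ∃ z ∈ segment ℝ x y, g y v - g x v = fderiv ℝ g z (y - x) v := by
  have hgv : ∀ z ∈ Set.univ, HasFDerivWithinAt (fun z => g z v)
      ((ContinuousLinearMap.apply ℝ ℝ v).comp (fderiv ℝ g z)) Set.univ z := fun z _ =>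
    ((ContinuousLinearMap.apply ℝ ℝ v).hasFDerivAt.comp z (hg z).hasFDerivAt).hasFDerivWithinAt
  exact domain_mvt hgv convex_univ (Set.mem_univ x) (Set.mem_univ y)

theorem inner_gradient {F : Type*} [NormedAddCommGroup F] [InnerProductSpace ℝ F]
    [CompleteSpace F] (f : F → ℝ) (x v : F) :
    ⟪v, gradient f x⟫ = fderiv ℝ f x v := by
  rw [← toDual_gradient, InnerProductSpace.toDual_apply_apply, real_inner_comm]

/-- With Hessian bounds `Ḣ ⪯ ∇²J ⪯ H̄`, `Ĥ := (H̄+Ḣ)/2`, `H̃ := H̄−Ḣ`,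
for all `r, y, v`: `|⟨v, ∇J(y) − ∇J(r)⟩ − vᵀĤ(y−r)| ≤ ½‖v‖_H̃ · ‖y−r‖_H̃`. -/
theorem stmt_1 {n : ℕ} (J : EuclideanSpace ℝ (Fin n) → ℝ)
    (Hlo Hhi : Matrix (Fin n) (Fin n) ℝ)
    (hHlo : Hlo.IsSymm) (hHhi : Hhi.IsSymm)
    (hJ : ContDiff ℝ 2 J)
    (hlow : ∀ z v : EuclideanSpace ℝ (Fin n),
      v ⬝ᵥ Hlo.mulVec v ≤ iteratedFDeriv ℝ 2 J z ![v, v])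
    (hhigh : ∀ z v : EuclideanSpace ℝ (Fin n),
      iteratedFDeriv ℝ 2 J z ![v, v] ≤ v ⬝ᵥ Hhi.mulVec v)
    (r y v : EuclideanSpace ℝ (Fin n)) :
    |⟪v, gradient J y - gradient J r⟫
        - v ⬝ᵥ (((2 : ℝ)⁻¹ • (Hhi + Hlo)).mulVec (y - r))|
      ≤ (1 / 2) * Real.sqrt (v ⬝ᵥ (Hhi - Hlo).mulVec v)
          * Real.sqrt ((y - r) ⬝ᵥ (Hhi - Hlo).mulVec (y - r)) := by
  have hsymm : ∀ z, IsSymmSndFDerivAt ℝ J z := fun z =>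
    hJ.contDiffAt.isSymmSndFDerivAt (by simp)
  obtain ⟨z, -, hz⟩ := exists_apply_sub_apply_eq_fderiv
    ((hJ.fderiv_right le_rfl).differentiable one_ne_zero) r y v
  simp only [iteratedFDeriv_two_apply, Matrix.cons_val_zero, Matrix.cons_val_one] at hlow hhigh
  have hbound := LinearMap.BilinForm.abs_two_mul_apply_sub_le
    (B := (fderiv ℝ (fderiv ℝ J) z).toBilinForm)
    (Blo := Hlo.toBilin (EuclideanSpace.basisFun (Fin n) ℝ).toBasis)
    (Bhi := Hhi.toBilin (EuclideanSpace.basisFun (Fin n) ℝ).toBasis) ⟨hsymm z⟩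
    ((isSymm_toBilin_iff_isSymm _).mpr hHlo) ((isSymm_toBilin_iff_isSymm _).mpr hHhi)
    (fun u => by
      simpa only [toBilin_euclideanBasisFun_apply, ContinuousLinearMap.toBilinForm_apply]
        using hlow z u)
    (fun u => by
      simpa only [toBilin_euclideanBasisFun_apply, ContinuousLinearMap.toBilinForm_apply]
        using hhigh z u)
    v (y - r)
  simp only [toBilin_euclideanBasisFun_apply, ContinuousLinearMap.toBilinForm_apply,
    WithLp.ofLp_sub] at hbound
  rw [inner_sub_right, inner_gradient, inner_gradient, hz, hsymm z, smul_mulVec,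
    dotProduct_smul, smul_eq_mul, show ∀ a c : ℝ, a - 2⁻¹ * c = (2 * a - c) / 2 by intros; ring,
    abs_div, abs_two]
  simp only [WithLp.ofLp_sub, sub_mulVec, add_mulVec, dotProduct_sub, dotProduct_add]
  linarith
end

section
/- Let Ḣ ⪯ H̄ be real symmetric n×n matrices, Ĥ := (H̄+Ḣ)/2 and H̃ := H̄ − Ḣ. Then for every real symmetric n×n matrix H with Ḣ ⪯ H ⪯ H̄ and all vectors a, b ∈ ℝⁿ: |aᵀHb − aᵀĤb| ≤ ½ ‖a‖_H̃ · ‖b‖_H̃. -/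
/-!
Write `P := H - Ḣ` and `Q := H̄ - H`; both are positive semidefinite, `H - Ĥ = (P - Q) / 2` and
`H̃ = P + Q`. Cauchy–Schwarz for the forms of `P` and of `Q` bounds `|aᵀPb|` and `|aᵀQb|`, and
Cauchy–Schwarz in `ℝ²` combines the two bounds into one for `P + Q`.
-/

open Matrix

lemma Real.sqrt_mul_sqrt_add_sqrt_mul_sqrt_le {p q p' q' : ℝ} (hp : 0 ≤ p) (hq : 0 ≤ q)
    (hp' : 0 ≤ p') (hq' : 0 ≤ q') :
    √p * √p' + √q * √q' ≤ √(p + q) * √(p' + q') := by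
  rw [← Real.sqrt_mul (add_nonneg hp hq)]
  apply Real.le_sqrt_of_sq_le
  nlinarith [sq_nonneg (√p * √q' - √q * √p'), Real.sq_sqrt hp, Real.sq_sqrt hq,
    Real.sq_sqrt hp', Real.sq_sqrt hq']

namespace Matrix.PosSemidef

variable {n : Type*} [Fintype n] {M : Matrix n n ℝ}

lemma dotProduct_mulVec_self_nonneg (hM : M.PosSemidef) (x : n → ℝ) : 0 ≤ x ⬝ᵥ M *ᵥ x := by
  simpa using hM.dotProduct_mulVec_nonneg x

lemma abs_dotProduct_mulVec_le (hM : M.PosSemidef) (a b : n → ℝ) :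
    |a ⬝ᵥ M *ᵥ b| ≤ √(a ⬝ᵥ M *ᵥ a) * √(b ⬝ᵥ M *ᵥ b) := by
  classical
  have hsymm : M.toBilin'.IsSymm :=
    isSymm_toBilin'_iff_isSymm.mpr (isHermitian_iff_isSymm.mp hM.isHermitian)
  have hcs := M.toBilin'.apply_sq_le_of_symm
    (fun x ↦ by simpa only [toBilin'_apply'] using hM.dotProduct_mulVec_self_nonneg x)
    (LinearMap.BilinForm.isSymm_iff.mp hsymm) a b
  simp only [toBilin'_apply'] at hcs
  rw [← Real.sqrt_mul (hM.dotProduct_mulVec_self_nonneg a), ← Real.sqrt_sq_eq_abs]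
  exact Real.sqrt_le_sqrt hcs

end Matrix.PosSemidef

lemma Matrix.abs_dotProduct_sub_mulVec_le {n : Type*} [Fintype n] {P Q : Matrix n n ℝ}
    (hP : P.PosSemidef) (hQ : Q.PosSemidef) (a b : n → ℝ) :
    |a ⬝ᵥ (P - Q) *ᵥ b| ≤ √(a ⬝ᵥ (P + Q) *ᵥ a) * √(b ⬝ᵥ (P + Q) *ᵥ b) := by
  simp only [sub_mulVec, add_mulVec, dotProduct_sub, dotProduct_add]
  calc |a ⬝ᵥ P *ᵥ b - a ⬝ᵥ Q *ᵥ b|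
      ≤ |a ⬝ᵥ P *ᵥ b| + |a ⬝ᵥ Q *ᵥ b| := abs_sub _ _
    _ ≤ √(a ⬝ᵥ P *ᵥ a) * √(b ⬝ᵥ P *ᵥ b) + √(a ⬝ᵥ Q *ᵥ a) * √(b ⬝ᵥ Q *ᵥ b) :=
        add_le_add (hP.abs_dotProduct_mulVec_le a b) (hQ.abs_dotProduct_mulVec_le a b)
    _ ≤ _ := Real.sqrt_mul_sqrt_add_sqrt_mul_sqrt_le
        (hP.dotProduct_mulVec_self_nonneg a) (hQ.dotProduct_mulVec_self_nonneg a)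
        (hP.dotProduct_mulVec_self_nonneg b) (hQ.dotProduct_mulVec_self_nonneg b)

theorem stmt_4_general {n : ℕ} (Hlo Hhi H : Matrix (Fin n) (Fin n) ℝ)
    (h1 : (H - Hlo).PosSemidef) (h2 : (Hhi - H).PosSemidef)
    (a b : Fin n → ℝ) :
    |a ⬝ᵥ H.mulVec b - a ⬝ᵥ (((2 : ℝ)⁻¹ • (Hhi + Hlo)).mulVec b)|
      ≤ (1 / 2) * Real.sqrt (a ⬝ᵥ (Hhi - Hlo).mulVec a)
          * Real.sqrt (b ⬝ᵥ (Hhi - Hlo).mulVec b) := by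
  have hdiff : a ⬝ᵥ H.mulVec b - a ⬝ᵥ (((2 : ℝ)⁻¹ • (Hhi + Hlo)).mulVec b)
      = (1 / 2) * (a ⬝ᵥ ((H - Hlo) - (Hhi - H)) *ᵥ b) := by
    simp only [sub_mulVec, add_mulVec, smul_mulVec, dotProduct_sub, dotProduct_add,
      dotProduct_smul, smul_eq_mul]
    ring
  have hsum : Hhi - Hlo = (H - Hlo) + (Hhi - H) := by abel
  rw [hdiff, abs_mul, abs_of_pos one_half_pos, hsum, mul_assoc]
  exact mul_le_mul_of_nonneg_left (abs_dotProduct_sub_mulVec_le h1 h2 a b) one_half_pos.le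

/-- For symmetric `Ḣ ⪯ H̄`, `Ĥ := (H̄+Ḣ)/2`, `H̃ := H̄−Ḣ`, every symmetric `H`
with `Ḣ ⪯ H ⪯ H̄` and all `a, b ∈ ℝⁿ` satisfy `|aᵀHb − aᵀĤb| ≤ ½‖a‖_H̃‖b‖_H̃`. -/
theorem stmt_4 {n : ℕ} (Hlo Hhi H : Matrix (Fin n) (Fin n) ℝ)
    (hHlo : Hlo.IsSymm) (hHhi : Hhi.IsSymm) (hH : H.IsSymm)
    (hle : (Hhi - Hlo).PosSemidef)
    (h1 : (H - Hlo).PosSemidef) (h2 : (Hhi - H).PosSemidef)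
    (a b : Fin n → ℝ) :
    |a ⬝ᵥ H.mulVec b - a ⬝ᵥ (((2 : ℝ)⁻¹ • (Hhi + Hlo)).mulVec b)|
      ≤ (1 / 2) * Real.sqrt (a ⬝ᵥ (Hhi - Hlo).mulVec a)
          * Real.sqrt (b ⬝ᵥ (Hhi - Hlo).mulVec b) :=
  stmt_4_general Hlo Hhi H h1 h2 a b
end

section
/- Let J : ℝⁿ → ℝ be twice continuously differentiable with Hessian bounds Ḣ ⪯ ∇²J ⪯ H̄, and set Ĥ := (H̄+Ḣ)/2 and H̃ := H̄ − Ḣ. Then for all r, y, yₖ ∈ ℝⁿ, writing Δy := yₖ − y and e := y − r, we have |J(yₖ) − J(y) − ⟨Δy, ∇J(r)⟩ − ΔyᵀĤe − ½ΔyᵀĤΔy| ≤ ½‖Δy‖_H̃‖e‖_H̃ + ¼‖Δy‖²_H̃. -/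
open Matrix
open scoped RealInnerProductSpace

/-!
The sandwich `Ḣ ⪯ ∇²J(z) ⪯ H̄` makes `∇²J(z) - Ḣ` and `H̄ - ∇²J(z)` positive semidefinite, and
Cauchy–Schwarz for each of them gives `|∇²J(z)(u, v) - uᵀĤv| ≤ ½ ‖u‖_H̃ ‖v‖_H̃`. The mean value
theorem along the segment from `r` to `y` turns this into
`|⟨Δy, ∇J(y) - ∇J(r)⟩ - ΔyᵀĤe| ≤ ½ ‖Δy‖_H̃ ‖e‖_H̃`. Along the segment from `y` to `yₖ` the same
bound grows linearly in the parameter, so it integrates to the second-order Taylor estimate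
`|J(yₖ) - J(y) - ⟨Δy, ∇J(y)⟩ - ½ ΔyᵀĤΔy| ≤ ¼ ‖Δy‖²_H̃`. The claim is the sum of the two.
-/

open Set

theorem Real.sqrt_mul_sqrt_add_sqrt_mul_sqrt_le_s7 {a b c d : ℝ} (ha : 0 ≤ a) (hb : 0 ≤ b)
    (hc : 0 ≤ c) (hd : 0 ≤ d) : √a * √b + √c * √d ≤ √(a + c) * √(b + d) := by
  rw [← Real.sqrt_mul (add_nonneg ha hc)]
  apply Real.le_sqrt_of_sq_le
  nlinarith [sq_nonneg (√a * √d - √c * √b), Real.sq_sqrt ha, Real.sq_sqrt hb, Real.sq_sqrt hc,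
    Real.sq_sqrt hd]

namespace LinearMap.BilinForm

variable {M : Type*} [AddCommGroup M] [Module ℝ M]

theorem abs_apply_le_sqrt_mul_sqrt_s7 {B : LinearMap.BilinForm ℝ M} (hB : B.IsSymm)
    (hs : ∀ x, 0 ≤ B x x) (x y : M) : |B x y| ≤ √(B x x) * √(B y y) := by
  rw [← Real.sqrt_mul (hs x)]
  exact Real.abs_le_sqrt (B.apply_sq_le_of_symm hs (isSymm_iff.mp hB) x y)

theorem abs_apply_sub_midpoint_le {B L U : LinearMap.BilinForm ℝ M} (hB : B.IsSymm) (hL : L.IsSymm)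
    (hU : U.IsSymm) (hLB : ∀ x, L x x ≤ B x x) (hBU : ∀ x, B x x ≤ U x x) (x y : M) :
    |B x y - (L x y + U x y) / 2| ≤ √(U x x - L x x) * √(U y y - L y y) / 2 := by
  have hlower := abs_apply_le_sqrt_mul_sqrt_s7 (hB.sub hL) (fun z => sub_nonneg.2 (hLB z)) x y
  have hupper := abs_apply_le_sqrt_mul_sqrt_s7 (hU.sub hB) (fun z => sub_nonneg.2 (hBU z)) x y
  have hsum := Real.sqrt_mul_sqrt_add_sqrt_mul_sqrt_le_s7 (sub_nonneg.2 (hLB x))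
    (sub_nonneg.2 (hLB y)) (sub_nonneg.2 (hBU x)) (sub_nonneg.2 (hBU y))
  simp only [LinearMap.sub_apply] at hlower hupper
  simp only [sub_add_sub_cancel'] at hsum
  calc |B x y - (L x y + U x y) / 2| = |(B x y - L x y) - (U x y - B x y)| / 2 := by
        rw [← abs_two, ← abs_div]; congr 1; ring
    _ ≤ (|B x y - L x y| + |U x y - B x y|) / 2 := by gcongr; exact abs_sub _ _
    _ ≤ √(U x x - L x x) * √(U y y - L y y) / 2 := by gcongr; linarith

end LinearMap.BilinForm

section Matrix

variable {ι : Type*} [Fintype ι]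

def Matrix.euclideanBilinForm (A : Matrix ι ι ℝ) : LinearMap.BilinForm ℝ (EuclideanSpace ℝ ι) :=
  LinearMap.mk₂ ℝ (fun u v => u ⬝ᵥ A *ᵥ v) (fun _ _ _ => by simp [add_dotProduct])
    (fun _ _ _ => by simp [smul_dotProduct]) (fun _ _ _ => by simp [mulVec_add])
    (fun _ _ _ => by simp [mulVec_smul])

theorem Matrix.IsSymm.isSymm_euclideanBilinForm {A : Matrix ι ι ℝ} (hA : A.IsSymm) :
    A.euclideanBilinForm.IsSymm := by
  refine ⟨fun u v => ?_⟩
  simp only [euclideanBilinForm, LinearMap.mk₂_apply]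
  rw [dotProduct_mulVec, ← mulVec_transpose, hA.eq, dotProduct_comm]

theorem abs_fderiv_fderiv_sub_midpoint_le {J : EuclideanSpace ℝ ι → ℝ} {Hlo Hhi : Matrix ι ι ℝ}
    {z : EuclideanSpace ℝ ι} (hHlo : Hlo.IsSymm) (hHhi : Hhi.IsSymm)
    (hJ : IsSymmSndFDerivAt ℝ J z)
    (hlow : ∀ v : EuclideanSpace ℝ ι, v ⬝ᵥ Hlo *ᵥ v ≤ fderiv ℝ (fderiv ℝ J) z v v)
    (hhigh : ∀ v : EuclideanSpace ℝ ι, fderiv ℝ (fderiv ℝ J) z v v ≤ v ⬝ᵥ Hhi *ᵥ v)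
    (u v : EuclideanSpace ℝ ι) :
    |fderiv ℝ (fderiv ℝ J) z u v - u ⬝ᵥ ((2 : ℝ)⁻¹ • (Hhi + Hlo)) *ᵥ v|
      ≤ √(u ⬝ᵥ (Hhi - Hlo) *ᵥ u) * √(v ⬝ᵥ (Hhi - Hlo) *ᵥ v) / 2 := by
  let hessian : LinearMap.BilinForm ℝ (EuclideanSpace ℝ ι) :=
    (ContinuousLinearMap.coeLM ℝ).comp (fderiv ℝ (fderiv ℝ J) z).toLinearMap
  have hmid : u ⬝ᵥ ((2 : ℝ)⁻¹ • (Hhi + Hlo)) *ᵥ v = (u ⬝ᵥ Hlo *ᵥ v + u ⬝ᵥ Hhi *ᵥ v) / 2 := by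
    simp only [smul_mulVec, add_mulVec, dotProduct_smul, dotProduct_add, smul_eq_mul]; ring
  have hrange (x : EuclideanSpace ℝ ι) :
      x ⬝ᵥ (Hhi - Hlo) *ᵥ x = x ⬝ᵥ Hhi *ᵥ x - x ⬝ᵥ Hlo *ᵥ x := by
    rw [sub_mulVec, dotProduct_sub]
  rw [hmid, hrange, hrange]
  exact LinearMap.BilinForm.abs_apply_sub_midpoint_le (B := hessian) ⟨hJ⟩
    hHlo.isSymm_euclideanBilinForm hHhi.isSymm_euclideanBilinForm hlow hhigh u v

end Matrix

theorem abs_sub_le_half_of_abs_deriv_le_mul {φ φ' : ℝ → ℝ} {K : ℝ}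
    (hφ : ∀ t, HasDerivAt φ (φ' t) t) (hφ' : ∀ t ∈ Ico (0 : ℝ) 1, |φ' t| ≤ K * t) :
    |φ 1 - φ 0| ≤ K / 2 := by
  have hK (t : ℝ) : HasDerivAt (fun t => K / 2 * t ^ 2) (K * t) t :=
    ((hasDerivAt_pow 2 t).const_mul (K / 2)).congr_deriv (by push_cast; ring)
  simpa using image_norm_le_of_norm_deriv_right_le_deriv_boundary (f := fun t => φ t - φ 0)
    (fun t _ => ((hφ t).sub_const _).continuousAt.continuousWithinAt)
    (fun t _ => ((hφ t).sub_const _).hasDerivWithinAt) (by simp) hK hφ'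
    (right_mem_Icc.2 zero_le_one)

section Segment

variable {E : Type*} [NormedAddCommGroup E] [NormedSpace ℝ E]

theorem hasDerivAt_comp_add_smul {F : Type*} [NormedAddCommGroup F] [NormedSpace ℝ F]
    {g : E → F} (hg : Differentiable ℝ g) (c v : E) (t : ℝ) :
    HasDerivAt (fun s : ℝ => g (c + s • v)) (fderiv ℝ g (c + t • v) v) t := by
  have hline : HasDerivAt (fun s : ℝ => c + s • v) v t := by
    simpa using ((hasDerivAt_id t).smul_const v).const_add c
  exact (hg _).hasFDerivAt.comp_hasDerivAt t hline

theorem abs_fderiv_add_apply_sub_le {f : E → ℝ} (hf : Differentiable ℝ (fderiv ℝ f))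
    {c v w : E} {β K : ℝ}
    (h : ∀ t ∈ Icc (0 : ℝ) 1, |fderiv ℝ (fderiv ℝ f) (c + t • v) v w - β| ≤ K) :
    |fderiv ℝ f (c + v) w - fderiv ℝ f c w - β| ≤ K := by
  have hφ (t : ℝ) : HasDerivAt (fun s : ℝ => fderiv ℝ f (c + s • v) w - s * β)
      (fderiv ℝ (fderiv ℝ f) (c + t • v) v w - β) t :=
    (((hasDerivAt_comp_add_smul hf c v t).clm_apply (hasDerivAt_const t w)).sub
      (hasDerivAt_mul_const β)).congr_deriv (by simp)
  simpa [sub_right_comm] using norm_image_sub_le_of_norm_deriv_le_segment_01'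
    (fun t _ => (hφ t).hasDerivWithinAt) (fun t ht => h t (Ico_subset_Icc_self ht))

theorem abs_sub_sub_fderiv_sub_half_le {f : E → ℝ} (hf : Differentiable ℝ f)
    (hf' : Differentiable ℝ (fderiv ℝ f)) {c v : E} {β K : ℝ}
    (h : ∀ t ∈ Icc (0 : ℝ) 1, |fderiv ℝ (fderiv ℝ f) (c + t • v) v v - β| ≤ K) :
    |f (c + v) - f c - fderiv ℝ f c v - β / 2| ≤ K / 2 := by
  have hquad (t : ℝ) : HasDerivAt (fun s : ℝ => s ^ 2 / 2 * β) (t * β) t :=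
    (((hasDerivAt_pow 2 t).div_const 2).mul_const β).congr_deriv (by push_cast; ring)
  have hφ (t : ℝ) : HasDerivAt (fun s : ℝ => f (c + s • v) - s * fderiv ℝ f c v - s ^ 2 / 2 * β)
      (fderiv ℝ f (c + t • v) v - fderiv ℝ f c v - t * β) t :=
    ((hasDerivAt_comp_add_smul hf c v t).sub (hasDerivAt_mul_const _)).sub (hquad t)
  have hslope : ∀ t ∈ Ico (0 : ℝ) 1,
      |fderiv ℝ f (c + t • v) v - fderiv ℝ f c v - t * β| ≤ K * t := by
    intro t ht
    refine abs_fderiv_add_apply_sub_le hf' fun s hs => ?_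
    have hst : s * t ∈ Icc (0 : ℝ) 1 := ⟨mul_nonneg hs.1 ht.1, mul_le_one₀ hs.2 ht.1 ht.2.le⟩
    rw [smul_smul, map_smul, FunLike.coe_smul, Pi.smul_apply, smul_eq_mul, ← mul_sub, abs_mul,
      abs_of_nonneg ht.1, mul_comm K]
    exact mul_le_mul_of_nonneg_left (h _ hst) ht.1
  convert abs_sub_le_half_of_abs_deriv_le_mul hφ hslope using 2
  simp only [one_smul, zero_smul, add_zero]
  ring

end Segment

/-- With Hessian bounds `Ḣ ⪯ ∇²J ⪯ H̄`, `Ĥ := (H̄+Ḣ)/2`, `H̃ := H̄−Ḣ`, for all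
`r, y, yₖ`, writing `Δy := yₖ − y` and `e := y − r`:
`|J(yₖ) − J(y) − ⟨Δy, ∇J(r)⟩ − ΔyᵀĤe − ½ΔyᵀĤΔy| ≤ ½‖Δy‖_H̃‖e‖_H̃ + ¼‖Δy‖²_H̃`. -/
theorem stmt_7 {n : ℕ} (J : EuclideanSpace ℝ (Fin n) → ℝ)
    (Hlo Hhi : Matrix (Fin n) (Fin n) ℝ)
    (hHlo : Hlo.IsSymm) (hHhi : Hhi.IsSymm)
    (hJ : ContDiff ℝ 2 J)
    (hlow : ∀ z v : EuclideanSpace ℝ (Fin n),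
      v ⬝ᵥ Hlo.mulVec v ≤ iteratedFDeriv ℝ 2 J z ![v, v])
    (hhigh : ∀ z v : EuclideanSpace ℝ (Fin n),
      iteratedFDeriv ℝ 2 J z ![v, v] ≤ v ⬝ᵥ Hhi.mulVec v)
    (r y yk : EuclideanSpace ℝ (Fin n)) :
    |J yk - J y - ⟪yk - y, gradient J r⟫
        - (yk - y) ⬝ᵥ (((2 : ℝ)⁻¹ • (Hhi + Hlo)).mulVec (y - r))
        - (1 / 2) * ((yk - y) ⬝ᵥ (((2 : ℝ)⁻¹ • (Hhi + Hlo)).mulVec (yk - y)))|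
      ≤ (1 / 2) * Real.sqrt ((yk - y) ⬝ᵥ (Hhi - Hlo).mulVec (yk - y))
            * Real.sqrt ((y - r) ⬝ᵥ (Hhi - Hlo).mulVec (y - r))
        + (1 / 4) * Real.sqrt ((yk - y) ⬝ᵥ (Hhi - Hlo).mulVec (yk - y)) ^ 2 := by
  simp only [iteratedFDeriv_two_apply, Matrix.cons_val_zero, Matrix.cons_val_one] at hlow hhigh
  have hJ1 : Differentiable ℝ J := hJ.differentiable two_ne_zero
  have hJ2 : Differentiable ℝ (fderiv ℝ J) :=
    (hJ.fderiv_right (m := 1) (by norm_num)).differentiable one_ne_zero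
  have hsym (z) : IsSymmSndFDerivAt ℝ J z := hJ.contDiffAt.isSymmSndFDerivAt (by simp)
  have hess (z) := abs_fderiv_fderiv_sub_midpoint_le hHlo hHhi (hsym z) (hlow z) (hhigh z)
  -- the statement elaborates some `(a - b)` as `a.ofLp - b.ofLp`
  simp only [← WithLp.ofLp_sub]
  set d := yk - y
  set e := y - r
  set Hmid := (2 : ℝ)⁻¹ • (Hhi + Hlo)
  set Hrange := Hhi - Hlo
  have hd : 0 ≤ d ⬝ᵥ Hrange *ᵥ d := by
    rw [sub_mulVec, dotProduct_sub, sub_nonneg]; exact (hlow y d).trans (hhigh y d)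
  have hgrad : |fderiv ℝ J y d - fderiv ℝ J r d - d ⬝ᵥ Hmid *ᵥ e|
      ≤ √(d ⬝ᵥ Hrange *ᵥ d) * √(e ⬝ᵥ Hrange *ᵥ e) / 2 := by
    have h := abs_fderiv_add_apply_sub_le hJ2 (c := r) (v := e) (w := d) fun t _ => by
      rw [hsym _ e d]; exact hess _ d e
    rwa [add_sub_cancel] at h
  have htaylor : |J yk - J y - fderiv ℝ J y d - d ⬝ᵥ Hmid *ᵥ d / 2| ≤ d ⬝ᵥ Hrange *ᵥ d / 2 / 2 := by
    have h := abs_sub_sub_fderiv_sub_half_le hJ1 hJ2 (c := y) (v := d)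
      (K := d ⬝ᵥ Hrange *ᵥ d / 2) fun t _ => by
        rw [← Real.mul_self_sqrt hd]; exact hess _ d d
    rwa [add_sub_cancel] at h
  rw [real_inner_comm, inner_gradient_left]
  calc _ = |(J yk - J y - fderiv ℝ J y d - d ⬝ᵥ Hmid *ᵥ d / 2)
          + (fderiv ℝ J y d - fderiv ℝ J r d - d ⬝ᵥ Hmid *ᵥ e)| := by
        congr 1; ring
    _ ≤ _ := (abs_add_le _ _).trans (add_le_add htaylor hgrad)
    _ = _ := by rw [Real.sq_sqrt hd]; ring
end

section
/- Let J : ℝⁿ → ℝ be twice continuously differentiable with Hessian upper bound ∇²J ⪯ H̄, let K be a real symmetric positive definite n×n matrix and γ ∈ ℝ such that K − K(H̄ + γI)K is positive semidefinite. Then for every r ∈ ℝⁿ, writing θ := ∇J(r): J(r − Kθ) − J(r) ≤ −½ θᵀKθ − (γ/2)‖Kθ‖². -/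
open Matrix
open scoped RealInnerProductSpace

/-!
Along the segment `t ↦ r - t • Kθ` the second derivative of `J` is at most `(Kθ)ᵀ H̄ (Kθ)`, so the
second-order Taylor bound gives `J(r - Kθ) - J(r) ≤ -θᵀKθ + ½ (Kθ)ᵀ H̄ (Kθ)`, the first-order term
being `⟪∇J(r), -Kθ⟫ = -θᵀKθ`. Testing the gain condition against `θ` and using `Kᵀ = K` gives
`(Kθ)ᵀ (H̄ + γI) (Kθ) ≤ θᵀKθ`, which turns this into the claimed decrease.
-/

theorem sub_le_deriv_add_half_of_deriv_deriv_le {f f' f'' : ℝ → ℝ} {M : ℝ}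
    (hf : ∀ t, HasDerivAt f (f' t) t) (hf' : ∀ t, HasDerivAt f' (f'' t) t)
    (hf'' : ∀ t, f'' t ≤ M) :
    f 1 - f 0 ≤ f' 0 + M / 2 := by
  have hslope : Monotone fun t => M * t - f' t :=
    monotone_of_hasDerivAt_nonneg (fun t => ((hasDerivAt_id t).const_mul M).sub (hf' t))
      fun t => by simpa using hf'' t
  have hgap_deriv : ∀ t, HasDerivAt (fun t => M * t ^ 2 / 2 + t * f' 0 - f t)
      (M * t + f' 0 - f' t) t := fun t =>
    ((((hasDerivAt_pow 2 t).const_mul M).div_const 2).add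
      ((hasDerivAt_id t).mul_const (f' 0))).sub (hf t) |>.congr_deriv (by ring)
  have hgap : MonotoneOn (fun t => M * t ^ 2 / 2 + t * f' 0 - f t) (Set.Ici 0) :=
    monotoneOn_of_hasDerivWithinAt_nonneg (convex_Ici 0)
      (fun t _ => (hgap_deriv t).continuousAt.continuousWithinAt)
      (fun t _ => (hgap_deriv t).hasDerivWithinAt)
      fun t ht => by linarith [hslope (interior_subset ht : (0 : ℝ) ≤ t)]
  have hends := hgap Set.self_mem_Ici (Set.mem_Ici.2 zero_le_one) zero_le_one
  simp only [one_pow, mul_one, one_mul] at hends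
  linarith

theorem sub_le_fderiv_add_half_of_iteratedFDeriv_two_le {E : Type*} [NormedAddCommGroup E]
    [NormedSpace ℝ E] {J : E → ℝ} (hJ : ContDiff ℝ 2 J) {x v : E} {M : ℝ}
    (hM : ∀ t : ℝ, iteratedFDeriv ℝ 2 J (x + t • v) ![v, v] ≤ M) :
    J (x + v) - J x ≤ fderiv ℝ J x v + M / 2 := by
  have hline : ∀ t : ℝ, HasDerivAt (fun t : ℝ => x + t • v) v t := fun t => by
    simpa using ((hasDerivAt_id t).smul_const v).const_add x
  have hJ' : Differentiable ℝ (fderiv ℝ J) :=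
    (hJ.fderiv_right (m := 1) le_rfl).differentiable one_ne_zero
  have key := sub_le_deriv_add_half_of_deriv_deriv_le
    (f := fun t => J (x + t • v)) (f' := fun t => fderiv ℝ J (x + t • v) v)
    (fun t => ((hJ.differentiable two_ne_zero) _).hasFDerivAt.comp_hasDerivAt t (hline t))
    (fun t => by
      simpa using ((hJ' _).hasFDerivAt.comp_hasDerivAt t (hline t)).clm_apply
        (hasDerivAt_const t v))
    (fun t => by simpa [iteratedFDeriv_two_apply] using hM t)
  simpa using key

theorem Matrix.dotProduct_mulVec_mulVec_le_of_posSemidef_sub {m : Type*} [Fintype m]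
    {K A : Matrix m m ℝ} (hK : K.IsSymm) (h : (K - K * A * K).PosSemidef) (θ : m → ℝ) :
    K *ᵥ θ ⬝ᵥ A *ᵥ (K *ᵥ θ) ≤ θ ⬝ᵥ K *ᵥ θ := by
  have hquad : θ ⬝ᵥ (K * A * K) *ᵥ θ = K *ᵥ θ ⬝ᵥ A *ᵥ (K *ᵥ θ) := by
    rw [← mulVec_mulVec, ← mulVec_mulVec, dotProduct_mulVec, ← mulVec_transpose, hK.eq]
  have := h.dotProduct_mulVec_nonneg θ
  rwa [star_trivial, sub_mulVec, dotProduct_sub, hquad, sub_nonneg] at this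

theorem EuclideanSpace.fderiv_apply_eq_gradient_dotProduct {ι : Type*} [Fintype ι]
    (J : EuclideanSpace ℝ ι → ℝ) (x v : EuclideanSpace ℝ ι) :
    fderiv ℝ J x v = (gradient J x).ofLp ⬝ᵥ v.ofLp := by
  rw [← inner_gradient_left, EuclideanSpace.inner_eq_star_dotProduct, star_trivial,
    dotProduct_comm]

theorem stmt_9_general {n : ℕ} (J : EuclideanSpace ℝ (Fin n) → ℝ)
    (Hhi : Matrix (Fin n) (Fin n) ℝ)
    (hJ : ContDiff ℝ 2 J)
    (hhigh : ∀ z v : EuclideanSpace ℝ (Fin n),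
      iteratedFDeriv ℝ 2 J z ![v, v] ≤ v ⬝ᵥ Hhi.mulVec v)
    (K : Matrix (Fin n) (Fin n) ℝ) (hK : K.PosDef) (γ : ℝ)
    (hgain : (K - K * (Hhi + γ • (1 : Matrix (Fin n) (Fin n) ℝ)) * K).PosSemidef)
    (r : EuclideanSpace ℝ (Fin n))
    (θ : EuclideanSpace ℝ (Fin n)) (hθ : θ = gradient J r) :
    J (Sub.sub r (WithLp.toLp 2 (K.mulVec θ))) - J r
      ≤ -(1 / 2) * (θ ⬝ᵥ K.mulVec θ)
        - (γ / 2) * (K.mulVec θ ⬝ᵥ K.mulVec θ) := by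
  set d := K *ᵥ θ
  have hcurv : ∀ z, iteratedFDeriv ℝ 2 J z ![-WithLp.toLp 2 d, -WithLp.toLp 2 d]
      ≤ d ⬝ᵥ Hhi *ᵥ d := fun z => by simpa [mulVec_neg] using hhigh z (-WithLp.toLp 2 d)
  have htaylor := sub_le_fderiv_add_half_of_iteratedFDeriv_two_le hJ (x := r)
    fun t => hcurv (r + t • _)
  have hstep : d ⬝ᵥ Hhi *ᵥ d + γ * (d ⬝ᵥ d) ≤ θ ⬝ᵥ d := by
    simpa only [add_mulVec, smul_mulVec, one_mulVec, dotProduct_add, dotProduct_smul,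
      smul_eq_mul] using
      dotProduct_mulVec_mulVec_le_of_posSemidef_sub (K := K) hK.isHermitian hgain θ
  rw [EuclideanSpace.fderiv_apply_eq_gradient_dotProduct, ← hθ] at htaylor
  simp only [WithLp.ofLp_neg, dotProduct_neg] at htaylor
  rw [show Sub.sub r (WithLp.toLp 2 d) = r + -WithLp.toLp 2 d from sub_eq_add_neg _ _]
  linarith

/-- With Hessian upper bound `∇²J ⪯ H̄`, `K` symmetric positive definite, and
`K − K(H̄ + γI)K ⪰ 0`, for every `r`, writing `θ := ∇J(r)`:
`J(r − Kθ) − J(r) ≤ −½θᵀKθ − (γ/2)‖Kθ‖²`. -/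
theorem stmt_9 {n : ℕ} (J : EuclideanSpace ℝ (Fin n) → ℝ)
    (Hhi : Matrix (Fin n) (Fin n) ℝ) (hHhi : Hhi.IsSymm)
    (hJ : ContDiff ℝ 2 J)
    (hhigh : ∀ z v : EuclideanSpace ℝ (Fin n),
      iteratedFDeriv ℝ 2 J z ![v, v] ≤ v ⬝ᵥ Hhi.mulVec v)
    (K : Matrix (Fin n) (Fin n) ℝ) (hK : K.PosDef) (γ : ℝ)
    (hgain : (K - K * (Hhi + γ • (1 : Matrix (Fin n) (Fin n) ℝ)) * K).PosSemidef)
    (r : EuclideanSpace ℝ (Fin n))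
    (θ : EuclideanSpace ℝ (Fin n)) (hθ : θ = gradient J r) :
    J (Sub.sub r (WithLp.toLp 2 (K.mulVec θ))) - J r
      ≤ -(1 / 2) * (θ ⬝ᵥ K.mulVec θ)
        - (γ / 2) * (K.mulVec θ ⬝ᵥ K.mulVec θ) :=
  stmt_9_general J Hhi hJ hhigh K hK γ hgain r θ hθ
end

section
/- Let K be a real symmetric positive semidefinite n×n matrix, Λ a real symmetric positive definite n×n matrix, α̲ ∈ (0,1), and θ ∈ ℝⁿ with ‖θ‖_K > 0. If Λ⁻¹ ⪰ ((2−α̲)/(1−α̲))·(√(‖K‖)/‖θ‖_K)·I, then every θ̃ ∈ ℝⁿ with ‖Λ⁻¹θ̃‖ ≤ 1 satisfies ‖θ̃‖_K ≤ (1−α̲)·‖θ + θ̃‖_K. -/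
/-!
From `Λ⁻¹ ⪰ c • 1` and Cauchy–Schwarz, `c ‖θ̃‖² ≤ θ̃ᵀ Λ⁻¹ θ̃ ≤ ‖θ̃‖ ‖Λ⁻¹ θ̃‖ ≤ ‖θ̃‖`, so
`‖θ̃‖_K ≤ √‖K‖ ‖θ̃‖ ≤ (1 - α) / (2 - α) ‖θ‖_K`. Writing `‖x‖_K = ‖√K x‖` shows that `‖·‖_K` is a
seminorm, so `‖θ‖_K ≤ ‖θ + θ̃‖_K + ‖θ̃‖_K`; substituting this into the previous bound and
rearranging gives `‖θ̃‖_K ≤ (1 - α) ‖θ + θ̃‖_K`.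
-/

open Matrix WithLp
open scoped MatrixOrder

namespace Matrix

variable {ι : Type*} [Fintype ι]

theorem dotProduct_le_norm_mul_norm (u w : ι → ℝ) :
    u ⬝ᵥ w ≤ ‖toLp 2 u‖ * ‖toLp 2 w‖ := by
  simpa [EuclideanSpace.inner_toLp_toLp, dotProduct_comm] using
    real_inner_le_norm (toLp 2 u) (toLp 2 w)

theorem sqrt_dotProduct_self (w : ι → ℝ) : √(w ⬝ᵥ w) = ‖toLp 2 w‖ := by
  rw [← Real.sqrt_sq (norm_nonneg (toLp 2 w)), ← real_inner_self_eq_norm_sq,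
    EuclideanSpace.inner_toLp_toLp, star_trivial]

variable [DecidableEq ι]

theorem dotProduct_mulVec_le_opNorm_mul_sq (A : Matrix ι ι ℝ) (v : ι → ℝ) :
    v ⬝ᵥ A *ᵥ v ≤ ‖toEuclideanCLM (𝕜 := ℝ) A‖ * ‖toLp 2 v‖ ^ 2 :=
  calc v ⬝ᵥ A *ᵥ v ≤ ‖toLp 2 v‖ * ‖toEuclideanCLM (𝕜 := ℝ) A (toLp 2 v)‖ :=
        dotProduct_le_norm_mul_norm v (A *ᵥ v)
    _ ≤ ‖toLp 2 v‖ * (‖toEuclideanCLM (𝕜 := ℝ) A‖ * ‖toLp 2 v‖) := by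
        gcongr; exact ContinuousLinearMap.le_opNorm _ _
    _ = ‖toEuclideanCLM (𝕜 := ℝ) A‖ * ‖toLp 2 v‖ ^ 2 := by ring

theorem mul_norm_sq_le_dotProduct_mulVec {M : Matrix ι ι ℝ} {c : ℝ}
    (hM : (M - c • 1).PosSemidef) (v : ι → ℝ) :
    c * ‖toLp 2 v‖ ^ 2 ≤ v ⬝ᵥ M *ᵥ v := by
  have h := hM.dotProduct_mulVec_nonneg v
  rw [star_trivial, sub_mulVec, smul_mulVec, one_mulVec, dotProduct_sub, dotProduct_smul,
    sub_nonneg, smul_eq_mul] at h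
  rwa [← sqrt_dotProduct_self, Real.sq_sqrt (by simpa using dotProduct_star_self_nonneg v)]

theorem mul_norm_le_one_of_posSemidef_sub_smul_one {M : Matrix ι ι ℝ} {c : ℝ}
    (hM : (M - c • 1).PosSemidef) {v : ι → ℝ} (hv : ‖toLp 2 (M *ᵥ v)‖ ≤ 1) :
    c * ‖toLp 2 v‖ ≤ 1 := by
  rcases (norm_nonneg (toLp 2 v)).eq_or_lt with hv0 | hv0
  · simp [← hv0]
  have : c * ‖toLp 2 v‖ * ‖toLp 2 v‖ ≤ 1 * ‖toLp 2 v‖ :=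
    calc c * ‖toLp 2 v‖ * ‖toLp 2 v‖ ≤ v ⬝ᵥ M *ᵥ v := by
          simpa [sq, mul_assoc] using mul_norm_sq_le_dotProduct_mulVec hM v
      _ ≤ ‖toLp 2 v‖ * ‖toLp 2 (M *ᵥ v)‖ := dotProduct_le_norm_mul_norm _ _
      _ ≤ 1 * ‖toLp 2 v‖ := by rw [one_mul]; exact mul_le_of_le_one_right hv0.le hv
  exact le_of_mul_le_mul_right this hv0

theorem mul_sqrt_dotProduct_mulVec_le_one_of_posSemidef_sub_smul_one {K M : Matrix ι ι ℝ}
    {c : ℝ} (hc : 0 ≤ c) (hM : (M - (c * √‖toEuclideanCLM (𝕜 := ℝ) K‖) • 1).PosSemidef)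
    {v : ι → ℝ} (hv : ‖toLp 2 (M *ᵥ v)‖ ≤ 1) :
    c * √(v ⬝ᵥ K *ᵥ v) ≤ 1 := by
  have hK : √(v ⬝ᵥ K *ᵥ v) ≤ √‖toEuclideanCLM (𝕜 := ℝ) K‖ * ‖toLp 2 v‖ := by
    rw [← Real.sqrt_sq (norm_nonneg (toLp 2 v)), ← Real.sqrt_mul (norm_nonneg _)]
    exact Real.sqrt_le_sqrt (dotProduct_mulVec_le_opNorm_mul_sq K v)
  calc c * √(v ⬝ᵥ K *ᵥ v) ≤ c * √‖toEuclideanCLM (𝕜 := ℝ) K‖ * ‖toLp 2 v‖ := by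
        rw [mul_assoc]; exact mul_le_mul_of_nonneg_left hK hc
    _ ≤ 1 := mul_norm_le_one_of_posSemidef_sub_smul_one hM hv

namespace PosSemidef

theorem sqrt_dotProduct_mulVec_self {K : Matrix ι ι ℝ} (hK : K.PosSemidef) (v : ι → ℝ) :
    √(v ⬝ᵥ K *ᵥ v) = ‖toLp 2 (CFC.sqrt K *ᵥ v)‖ := by
  have hsymm : (CFC.sqrt K)ᵀ = CFC.sqrt K := (CFC.sqrt_nonneg K).posSemidef.isHermitian
  rw [← sqrt_dotProduct_self]
  conv_lhs => rw [← CFC.sqrt_mul_sqrt_self K hK.nonneg]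
  rw [← mulVec_mulVec, dotProduct_mulVec, ← mulVec_transpose, hsymm]

theorem sqrt_dotProduct_mulVec_sub_le {K : Matrix ι ι ℝ} (hK : K.PosSemidef) (u v : ι → ℝ) :
    √((u - v) ⬝ᵥ K *ᵥ (u - v)) ≤ √(u ⬝ᵥ K *ᵥ u) + √(v ⬝ᵥ K *ᵥ v) := by
  simp only [hK.sqrt_dotProduct_mulVec_self]
  rw [mulVec_sub, toLp_sub]
  exact norm_sub_le _ _

end PosSemidef

end Matrix

theorem stmt_14_general {n : ℕ} (K Λ : Matrix (Fin n) (Fin n) ℝ)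
    (hK : K.PosSemidef)
    (α : ℝ) (hα : α ∈ Set.Ioo (0 : ℝ) 1)
    (θ : Fin n → ℝ) (hθ : 0 < Real.sqrt (θ ⬝ᵥ K.mulVec θ))
    (hinfo : (Λ⁻¹ - (((2 - α) / (1 - α))
        * (Real.sqrt ‖(Matrix.toEuclideanCLM (𝕜 := ℝ) K :
              EuclideanSpace ℝ (Fin n) →L[ℝ] EuclideanSpace ℝ (Fin n))‖
            / Real.sqrt (θ ⬝ᵥ K.mulVec θ)))
        • (1 : Matrix (Fin n) (Fin n) ℝ)).PosSemidef)
    (θtil : Fin n → ℝ)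
    (h : Real.sqrt (Λ⁻¹.mulVec θtil ⬝ᵥ Λ⁻¹.mulVec θtil) ≤ 1) :
    Real.sqrt (θtil ⬝ᵥ K.mulVec θtil)
      ≤ (1 - α) * Real.sqrt ((θ + θtil) ⬝ᵥ K.mulVec (θ + θtil)) := by
  obtain ⟨-, hα1⟩ := hα
  set N := √(θ ⬝ᵥ K *ᵥ θ)
  set e := √(θtil ⬝ᵥ K *ᵥ θtil)
  have h1α : 0 < 1 - α := by linarith
  have hden : 0 < (1 - α) * N := mul_pos h1α hθ
  have hball : (2 - α) * e ≤ (1 - α) * N := by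
    have hc : 0 ≤ (2 - α) / ((1 - α) * N) := div_nonneg (by linarith) hden.le
    have hinfo' :
        (Λ⁻¹ - ((2 - α) / ((1 - α) * N) * √‖toEuclideanCLM (𝕜 := ℝ) K‖) • 1).PosSemidef := by
      convert hinfo using 3
      field_simp
    have hce := mul_sqrt_dotProduct_mulVec_le_one_of_posSemidef_sub_smul_one hc hinfo'
      (by rwa [← sqrt_dotProduct_self])
    rwa [div_mul_eq_mul_div, div_le_one hden] at hce
  have htri : N ≤ √((θ + θtil) ⬝ᵥ K *ᵥ (θ + θtil)) + e := by
    simpa using hK.sqrt_dotProduct_mulVec_sub_le (θ + θtil) θtil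
  linarith [mul_le_mul_of_nonneg_left htri h1α.le]

/-- key step of the paper's Lemma 2: for `K` symmetric PSD, `Λ` symmetric
positive definite, `α̲ ∈ (0,1)`, `‖θ‖_K > 0`, if
`Λ⁻¹ ⪰ ((2−α̲)/(1−α̲))·(√(‖K‖)/‖θ‖_K)·I` then every `θ̃` with `‖Λ⁻¹θ̃‖ ≤ 1` satisfies
`‖θ̃‖_K ≤ (1−α̲)‖θ + θ̃‖_K`. -/
theorem stmt_14 {n : ℕ} (K Λ : Matrix (Fin n) (Fin n) ℝ)
    (hK : K.PosSemidef) (hΛ : Λ.PosDef)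
    (α : ℝ) (hα : α ∈ Set.Ioo (0 : ℝ) 1)
    (θ : Fin n → ℝ) (hθ : 0 < Real.sqrt (θ ⬝ᵥ K.mulVec θ))
    (hinfo : (Λ⁻¹ - (((2 - α) / (1 - α))
        * (Real.sqrt ‖(Matrix.toEuclideanCLM (𝕜 := ℝ) K :
              EuclideanSpace ℝ (Fin n) →L[ℝ] EuclideanSpace ℝ (Fin n))‖
            / Real.sqrt (θ ⬝ᵥ K.mulVec θ)))
        • (1 : Matrix (Fin n) (Fin n) ℝ)).PosSemidef)
    (θtil : Fin n → ℝ)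
    (h : Real.sqrt (Λ⁻¹.mulVec θtil ⬝ᵥ Λ⁻¹.mulVec θtil) ≤ 1) :
    Real.sqrt (θtil ⬝ᵥ K.mulVec θtil)
      ≤ (1 - α) * Real.sqrt ((θ + θtil) ⬝ᵥ K.mulVec (θ + θtil)) :=
  stmt_14_general K Λ hK α hα θ hθ hinfo θtil h
end
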